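/- Let F be the free group on three generators x₁, x₂, x₃, let R_i be the normal closure of x_i for i = 1, 2, 3, and let R₀ be the normal closure of x₁x₂x₃. Then the element w = [[x₁, x₂], [x₁, x₂x₃]] does NOT belong to the symmetric commutator subgroup [R₀, R₁, R₂, R₃]_S. -/

import Mathlib

set_option maxHeartbeats 1000000


/-- The left-normed iterated commutator subgroup
`[N₁, …, N_k] = [[…[[N₁, N₂], N₃]…], N_k]` of a list of subgroups. -/
def iterComm {G : Type*} [Group G] : List (Subgroup G) → Subgroup G
  | [] => ⊥
  | N :: l => l.foldl (fun A B => ⁅A, B⁆) N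

/-- The symmetric commutator subgroup `[N₁, …, N_k]_S`: the subgroup generated by all
left-normed iterated commutator subgroups `[N_{σ(1)}, …, N_{σ(k)}]` over permutations `σ`. -/
def symmComm {G : Type*} [Group G] {k : ℕ} (N : Fin k → Subgroup G) : Subgroup G :=
  ⨆ σ : Equiv.Perm (Fin k), iterComm (List.ofFn fun i => N (σ i))

/-- In the free group on `n` generators `x₁, …, xₙ` (indexed by `Fin n`), `R n 0` is the
normal closure of the product `x₁x₂⋯xₙ`, and `R n i` for `i ≠ 0` is the normal closure of
the generator `x_i`. -/
def R (n : ℕ) (i : Fin (n + 1)) : Subgroup (FreeGroup (Fin n)) :=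
  if h : i = 0 then
    Subgroup.normalClosure {(List.ofFn fun j : Fin n => FreeGroup.of j).prod}
  else
    Subgroup.normalClosure {FreeGroup.of (i.pred h)}


/-- The commutator `[u, v] = u⁻¹v⁻¹uv` of two group elements. -/
def commE {G : Type*} [Group G] (u v : G) : G := u⁻¹ * v⁻¹ * u * v

open scoped commutatorElement

set_option maxHeartbeats 1000000 in
abbrev Amat := Matrix (Fin 5) (Fin 5) (ZMod 2)
def Jp (k : ℕ) (X : Amat) : Prop := ∀ i j : Fin 5, (j : ℕ) < (i : ℕ) + k → X i j = 0
instance (k : ℕ) (X : Amat) : Decidable (Jp k X) := by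
  unfold Jp; exact @Fintype.decidableForallFintype _ _ (fun i => inferInstance) _
lemma Jp_zero (k : ℕ) : Jp k 0 := fun _ _ _ => rfl
lemma Jp_add {k X Y} (hX : Jp k X) (hY : Jp k Y) : Jp k (X + Y) := fun i j h => by
  simp [Matrix.add_apply, hX i j h, hY i j h]
lemma Jp_neg {k X} (hX : Jp k X) : Jp k (-X) := fun i j h => by
  simp [Matrix.neg_apply, hX i j h]
lemma Jp_sub {k X Y} (hX : Jp k X) (hY : Jp k Y) : Jp k (X - Y) := by
  simpa [sub_eq_add_neg] using Jp_add hX (Jp_neg hY)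
lemma Jp_smul {k X} (c : ZMod 2) (hX : Jp k X) : Jp k (c • X) := fun i j h => by
  simp [Matrix.smul_apply, hX i j h]
lemma Jp_mono {k l : ℕ} (hkl : k ≤ l) {X} (hX : Jp l X) : Jp k (X) := fun i j h =>
  hX i j (h.trans_le (by omega))
lemma Jp_mul {a b X Y} (hX : Jp a X) (hY : Jp b Y) : Jp (a + b) (X * Y) := by
  intro i j h
  rw [Matrix.mul_apply]
  apply Finset.sum_eq_zero
  intro k _
  by_cases hk : (k : ℕ) < (i : ℕ) + a
  · rw [hX i k hk, zero_mul]
  · rw [hY k j (by omega), mul_zero]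
lemma Jp_one : Jp 0 1 := by decide
lemma Jp_eq_zero {X} (hX : Jp 5 X) : X = 0 := by
  ext i j
  exact hX i j (by omega)

-- convenient corollaries
lemma Jp_mul' {a b c X Y} (h : a + b = c) (hX : Jp a X) (hY : Jp b Y) : Jp c (X * Y) :=
  h ▸ Jp_mul hX hY

/-- inverse formula for unipotent units -/
lemma inv_val (g : Amatˣ) (h : Jp 1 ((g : Amat) - 1)) :
    ((g⁻¹ : Amatˣ) : Amat) =
      1 - ((g:Amat)-1) + ((g:Amat)-1)*((g:Amat)-1) - ((g:Amat)-1)*((g:Amat)-1)*((g:Amat)-1)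
        + ((g:Amat)-1)*((g:Amat)-1)*((g:Amat)-1)*((g:Amat)-1) := by
  set x := (g : Amat) - 1 with hx
  apply Units.inv_eq_of_mul_eq_one_right
  have hg : (g : Amat) = 1 + x := by rw [hx]; noncomm_ring
  rw [hg]
  have h5 : x*x*x*x*x = 0 :=
    Jp_eq_zero (Jp_mul' rfl (Jp_mul' rfl (Jp_mul' rfl (Jp_mul' rfl h h) h) h) h)
  have : (1 + x) * (1 - x + x*x - x*x*x + x*x*x*x) = 1 + x*x*x*x*x := by noncomm_ring
  rw [this, h5, add_zero]

lemma Jp_inv_sub_one (g : Amatˣ) (h : Jp 1 ((g : Amat) - 1)) :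
    Jp 1 (((g⁻¹ : Amatˣ) : Amat) - 1) := by
  rw [inv_val g h]
  set x := (g : Amat) - 1
  have e : (1 : Amat) - x + x*x - x*x*x + x*x*x*x - 1
      = -x + x*x - x*x*x + x*x*x*x := by noncomm_ring
  rw [e]
  have h2 : Jp 1 (x*x) := Jp_mono (by omega) (Jp_mul' rfl h h)
  have h3 : Jp 1 (x*x*x) := Jp_mono (by omega) (Jp_mul' rfl (Jp_mul' rfl h h) h)
  have h4 : Jp 1 (x*x*x*x) := Jp_mono (by omega) (Jp_mul' rfl (Jp_mul' rfl (Jp_mul' rfl h h) h) h)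
  exact Jp_add (Jp_sub (Jp_add (Jp_neg h) h2) h3) h4

/-- Jp p of `g - 1` given membership data. -/
lemma Jp_of_data {p : ℕ} {a : Amat} (ha : Jp p a) {g : Amatˣ} {c : ZMod 2}
    (hc : Jp (p+1) ((g : Amat) - 1 - c • a)) : Jp p ((g : Amat) - 1) := by
  have : (g : Amat) - 1 = ((g : Amat) - 1 - c • a) + c • a := by noncomm_ring
  rw [this]
  exact Jp_add (Jp_mono (by omega) hc) (Jp_smul c ha)

/-- The subgroup of units with `g - 1 ≡ c • a` mod the `(p+1)`-st filtration step. -/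
def Sg (a : Amat) (p : ℕ) (hp : 0 < p) (ha : Jp p a) : Subgroup Amatˣ where
  carrier := {g | ∃ c : ZMod 2, Jp (p+1) ((g : Amat) - 1 - c • a)}
  one_mem' := ⟨0, by simpa using Jp_zero (p+1)⟩
  mul_mem' := by
    rintro g h ⟨c, hc⟩ ⟨c', hc'⟩
    refine ⟨c + c', ?_⟩
    have hx : Jp p ((g : Amat) - 1) := Jp_of_data ha hc
    have hy : Jp p ((h : Amat) - 1) := Jp_of_data ha hc'
    have key : ((g*h : Amatˣ) : Amat) - 1 - (c + c') • a
        = ((g : Amat) - 1 - c • a) + ((h : Amat) - 1 - c' • a)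
          + ((g : Amat) - 1) * ((h : Amat) - 1) := by
      rw [Units.val_mul, add_smul]
      noncomm_ring
    rw [key]
    exact Jp_add (Jp_add hc hc') (Jp_mono (by omega) (Jp_mul' rfl hx hy))
  inv_mem' := by
    rintro g ⟨c, hc⟩
    refine ⟨-c, ?_⟩
    have hx : Jp p ((g : Amat) - 1) := Jp_of_data ha hc
    have hx1 : Jp 1 ((g : Amat) - 1) := Jp_mono hp hx
    rw [inv_val g hx1]
    set x := (g : Amat) - 1 with hxdef
    have key : (1 : Amat) - x + x*x - x*x*x + x*x*x*x - 1 - (-c) • a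
        = -(x - c • a) + x*x - x*x*x + x*x*x*x := by
      rw [neg_smul]; noncomm_ring
    rw [key]
    have h2 : Jp (p+1) (x*x) := Jp_mono (by omega) (Jp_mul' rfl hx hx)
    have h3 : Jp (p+1) (x*x*x) := Jp_mono (by omega) (Jp_mul' rfl (Jp_mul' rfl hx hx) hx)
    have h4 : Jp (p+1) (x*x*x*x) :=
      Jp_mono (by omega) (Jp_mul' rfl (Jp_mul' rfl (Jp_mul' rfl hx hx) hx) hx)
    exact Jp_add (Jp_sub (Jp_add (Jp_neg hc) h2) h3) h4

lemma mem_Sg {a p hp ha} {g : Amatˣ} :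
    g ∈ Sg a p hp ha ↔ ∃ c : ZMod 2, Jp (p+1) ((g : Amat) - 1 - c • a) := Iff.rfl

/-- `Sg` is stable under conjugation by unipotent units. -/
lemma Sg_conj {a p hp ha} {u g : Amatˣ} (hu : Jp 1 ((u : Amat) - 1))
    (hg : g ∈ Sg a p hp ha) : u * g * u⁻¹ ∈ Sg a p hp ha := by
  obtain ⟨c, hc⟩ := hg
  refine ⟨c, ?_⟩
  have hx : Jp p ((g : Amat) - 1) := Jp_of_data ha hc
  have hu' : Jp 1 (((u⁻¹ : Amatˣ) : Amat) - 1) := Jp_inv_sub_one u hu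
  have hU : (u : Amat) * ((u⁻¹ : Amatˣ) : Amat) = 1 := u.mul_inv
  set x := (g : Amat) - 1 with hxdef
  set U := (u : Amat)
  set U' := ((u⁻¹ : Amatˣ) : Amat)
  have hgval : (g : Amat) = 1 + x := by rw [hxdef]; noncomm_ring
  have key : ((u * g * u⁻¹ : Amatˣ) : Amat) - 1 - c • a
      = (x - c • a) + (U - 1) * x * U' + x * (U' - 1) := by
    rw [Units.val_mul, Units.val_mul, hgval]
    have expand : U * (1 + x) * U' = U * U' + U * x * U' := by noncomm_ring
    rw [expand, hU]
    noncomm_ring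
  rw [key]
  have hU'0 : Jp 0 U' := by
    have : U' = (U' - 1) + 1 := by noncomm_ring
    rw [this]; exact Jp_add (Jp_mono (by omega) hu') Jp_one
  refine Jp_add (Jp_add hc ?_) ?_
  · exact Jp_mul' (by omega) (Jp_mul' rfl hu hx) hU'0
  · exact Jp_mul' (by omega) hx hu'

/-- Lie bracket. -/
def lie (a b : Amat) : Amat := a * b - b * a

lemma Jp_lie {p q a b} (ha : Jp p a) (hb : Jp q b) : Jp (p+q) (lie a b) :=
  Jp_sub (Jp_mul' rfl ha hb) (Jp_mul' (by omega) hb ha)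


/-- generic ring identity used for the commutator computation -/
lemma ring_key {Rng : Type*} [Ring Rng] (x y A' B' G' H' K : Rng)
    (h1 : K - 1 = (x*y - y*x) * (G'*H')) :
    K - 1 - (A'*B' - B'*A')
      = (x*y - y*x) * (G'*H' - 1)
        + (x*(y - B') + (x - A')*B' - y*(x - A') - (y - B')*A') := by
  rw [h1]; noncomm_ring

/-- Commutators of elements of `Sg a p` and `Sg b q` lie in `Sg (lie a b) (p+q)`. -/
lemma Sg_comm {a b : Amat} {p q : ℕ} {hp hq ha hb} {g h : Amatˣ}
    (hg : g ∈ Sg a p hp ha) (hh : h ∈ Sg b q hq hb) :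
    ⁅g, h⁆ ∈ Sg (lie a b) (p+q) (by omega) (Jp_lie ha hb) := by
  obtain ⟨c, hc⟩ := hg
  obtain ⟨c', hc'⟩ := hh
  refine ⟨c * c', ?_⟩
  have hx : Jp p ((g : Amat) - 1) := Jp_of_data ha hc
  have hy : Jp q ((h : Amat) - 1) := Jp_of_data hb hc'
  have hg1 : Jp 1 (((g⁻¹ : Amatˣ) : Amat) - 1) := Jp_inv_sub_one g (Jp_mono hp hx)
  have hh1 : Jp 1 (((h⁻¹ : Amatˣ) : Amat) - 1) := Jp_inv_sub_one h (Jp_mono hq hy)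
  set x := (g : Amat) - 1 with hxd
  set y := (h : Amat) - 1 with hyd
  set G' := ((g⁻¹ : Amatˣ) : Amat)
  set H' := ((h⁻¹ : Amatˣ) : Amat)
  have hGG' : (g : Amat) * G' = 1 := g.mul_inv
  have hHH' : (h : Amat) * H' = 1 := h.mul_inv
  -- step 1 : K - 1 = (xy - yx) * (G'H')
  have step1 : ((⁅g, h⁆ : Amatˣ) : Amat) - 1 = (x*y - y*x) * (G' * H') := by
    have hK : ((⁅g, h⁆ : Amatˣ) : Amat) = (g : Amat) * (h : Amat) * G' * H' := by
      rw [commutatorElement_def, Units.val_mul, Units.val_mul, Units.val_mul]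
    have e1 : x*y - y*x = (g : Amat) * (h : Amat) - (h : Amat) * (g : Amat) := by
      rw [hxd, hyd]; noncomm_ring
    have e2 : ((g : Amat) * (h : Amat) - (h : Amat) * (g : Amat)) * (G' * H')
        = (g : Amat) * (h : Amat) * G' * H' - (h : Amat) * ((g : Amat) * G') * H' := by
      noncomm_ring
    have e3 : (h : Amat) * ((g : Amat) * G') * H' = 1 := by
      rw [hGG', mul_one, hHH']
    rw [hK, e1, e2, e3]
  -- step 3 : scalar bookkeeping
  have step3 : (c * c') • lie a b = (c • a) * (c' • b) - (c' • b) * (c • a) := by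
    rw [lie, smul_sub, smul_mul_smul_comm, smul_mul_smul_comm, mul_comm c' c]
  have key := ring_key x y (c • a) (c' • b) G' H' _ step1
  rw [step3, key]
  have hG'H' : Jp 1 (G' * H' - 1) := by
    have e : G' * H' - 1 = (G' - 1) + (H' - 1) + (G' - 1) * (H' - 1) := by noncomm_ring
    rw [e]
    exact Jp_add (Jp_add hg1 hh1) (Jp_mono (by omega) (Jp_mul' rfl hg1 hh1))
  have hL : Jp (p+q) (x*y - y*x) := Jp_sub (Jp_mul' rfl hx hy) (Jp_mul' (by omega) hy hx)
  refine Jp_add (Jp_mul' (by omega) hL hG'H') ?_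
  refine Jp_sub (Jp_sub (Jp_add ?_ ?_) ?_) ?_
  · exact Jp_mul' (by omega) hx hc'
  · exact Jp_mul' (by omega) hc (Jp_smul c' hb)
  · exact Jp_mul' (by omega) hy hc
  · exact Jp_mul' (by omega) hc' (Jp_smul c ha)

/-! ### Concrete data -/

def M1 : Amat := !![0,0,0,0,0; 0,0,1,0,0; 0,0,0,0,0; 0,0,0,0,1; 0,0,0,0,0]
def M2 : Amat := !![0,0,0,0,0; 0,0,1,0,0; 0,0,0,1,0; 0,0,0,0,0; 0,0,0,0,0]
def M3 : Amat := !![0,1,0,0,0; 0,0,1,0,0; 0,0,0,0,0; 0,0,0,0,1; 0,0,0,0,0]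

def u1 : Amatˣ :=
  ⟨!![1,0,0,0,0; 0,1,1,0,0; 0,0,1,0,0; 0,0,0,1,1; 0,0,0,0,1],
   !![1,0,0,0,0; 0,1,1,0,0; 0,0,1,0,0; 0,0,0,1,1; 0,0,0,0,1], by decide, by decide⟩
def u2 : Amatˣ :=
  ⟨!![1,0,0,0,0; 0,1,1,0,0; 0,0,1,1,0; 0,0,0,1,0; 0,0,0,0,1],
   !![1,0,0,0,0; 0,1,1,1,0; 0,0,1,1,0; 0,0,0,1,0; 0,0,0,0,1], by decide, by decide⟩
def u3 : Amatˣ :=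
  ⟨!![1,1,0,0,0; 0,1,1,0,0; 0,0,1,0,0; 0,0,0,1,1; 0,0,0,0,1],
   !![1,1,1,0,0; 0,1,1,0,0; 0,0,1,0,0; 0,0,0,1,1; 0,0,0,0,1], by decide, by decide⟩

def uM : Fin 3 → Amatˣ := ![u1, u2, u3]

@[simp] lemma uM0 : uM 0 = u1 := rfl
@[simp] lemma uM1 : uM 1 = u2 := rfl
@[simp] lemma uM2 : uM 2 = u3 := rfl

def φ : FreeGroup (Fin 3) →* Amatˣ := FreeGroup.lift uM

/-- every element of the image of `φ` is unipotent -/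
def Ugrp : Subgroup Amatˣ where
  carrier := {g | Jp 1 ((g : Amat) - 1)}
  one_mem' := by simpa using Jp_zero 1
  mul_mem' := by
    intro g h hg hh
    have key : ((g * h : Amatˣ) : Amat) - 1
        = ((g : Amat) - 1) + ((h : Amat) - 1) + ((g : Amat) - 1) * ((h : Amat) - 1) := by
      rw [Units.val_mul]; noncomm_ring
    show Jp 1 _
    rw [key]
    exact Jp_add (Jp_add hg hh) (Jp_mono (by omega) (Jp_mul' rfl hg hh))
  inv_mem' := fun {g} hg => Jp_inv_sub_one g hg

lemma hU : ∀ g : FreeGroup (Fin 3), Jp 1 ((φ g : Amat) - 1) := by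
  intro g
  have hrange : φ.range ≤ Ugrp := by
    rw [φ, FreeGroup.range_lift_eq_closure]
    apply Subgroup.closure_le Ugrp |>.2
    rintro x ⟨i, rfl⟩
    fin_cases i
    · exact (by decide : Jp 1 ((u1 : Amat) - 1))
    · exact (by decide : Jp 1 ((u2 : Amat) - 1))
    · exact (by decide : Jp 1 ((u3 : Amat) - 1))
  exact hrange ⟨g, rfl⟩

/-- the leading matrices for the four normal closures -/
def μvec : Fin 4 → Amat := ![M1 + M2 + M3, M1, M2, M3]

lemma hμ : ∀ i, Jp 1 (μvec i) := by decide

lemma comap_normal (a : Amat) (p : ℕ) (hp : 0 < p) (ha : Jp p a) :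
    ((Sg a p hp ha).comap φ).Normal := by
  constructor
  intro n hn g
  rw [Subgroup.mem_comap] at hn ⊢
  rw [map_mul, map_mul, map_inv]
  exact Sg_conj (hU g) hn

lemma hR0 : R 3 0 ≤ (Sg (μvec 0) 1 one_pos (hμ 0)).comap φ := by
  haveI := comap_normal (μvec 0) 1 one_pos (hμ 0)
  rw [show R 3 0 = Subgroup.normalClosure
      {(List.ofFn fun j : Fin 3 => FreeGroup.of j).prod} from dif_pos rfl]
  apply Subgroup.normalClosure_le_normal
  rw [Set.singleton_subset_iff, SetLike.mem_coe, Subgroup.mem_comap]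
  have : φ (List.ofFn fun j : Fin 3 => FreeGroup.of j).prod = u1 * u2 * u3 := by
    simp [List.ofFn_succ, φ, mul_assoc]
  rw [this]
  exact ⟨1, by decide⟩

lemma hR1 : R 3 1 ≤ (Sg (μvec 1) 1 one_pos (hμ 1)).comap φ := by
  haveI := comap_normal (μvec 1) 1 one_pos (hμ 1)
  rw [show R 3 1 = Subgroup.normalClosure {FreeGroup.of 0} from dif_neg (by decide)]
  apply Subgroup.normalClosure_le_normal
  rw [Set.singleton_subset_iff, SetLike.mem_coe, Subgroup.mem_comap]
  rw [show φ (FreeGroup.of 0) = u1 from by simp [φ]]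
  exact ⟨1, by decide⟩

lemma hR2 : R 3 2 ≤ (Sg (μvec 2) 1 one_pos (hμ 2)).comap φ := by
  haveI := comap_normal (μvec 2) 1 one_pos (hμ 2)
  rw [show R 3 2 = Subgroup.normalClosure {FreeGroup.of 1} from dif_neg (by decide)]
  apply Subgroup.normalClosure_le_normal
  rw [Set.singleton_subset_iff, SetLike.mem_coe, Subgroup.mem_comap]
  rw [show φ (FreeGroup.of 1) = u2 from by simp [φ]]
  exact ⟨1, by decide⟩

lemma hR3 : R 3 3 ≤ (Sg (μvec 3) 1 one_pos (hμ 3)).comap φ := by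
  haveI := comap_normal (μvec 3) 1 one_pos (hμ 3)
  rw [show R 3 3 = Subgroup.normalClosure {FreeGroup.of 2} from dif_neg (by decide)]
  apply Subgroup.normalClosure_le_normal
  rw [Set.singleton_subset_iff, SetLike.mem_coe, Subgroup.mem_comap]
  rw [show φ (FreeGroup.of 2) = u3 from by simp [φ]]
  exact ⟨1, by decide⟩

lemma hR : ∀ i : Fin 4, R 3 i ≤ (Sg (μvec i) 1 one_pos (hμ i)).comap φ := by
  intro i
  fin_cases i
  · exact hR0
  · exact hR1
  · exact hR2
  · exact hR3

lemma stepF {P Q : Subgroup (FreeGroup (Fin 3))} {a b : Amat} {p q : ℕ} {hp hq ha hb}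
    (hP : P ≤ (Sg a p hp ha).comap φ) (hQ : Q ≤ (Sg b q hq hb).comap φ) :
    ⁅P, Q⁆ ≤ (Sg (lie a b) (p+q) (by omega) (Jp_lie ha hb)).comap φ := by
  rw [Subgroup.commutator_le]
  intro g hg h hh
  rw [Subgroup.mem_comap, map_commutatorElement]
  exact Sg_comm (hp := hp) (hq := hq) (ha := ha) (hb := hb) (hP hg) (hQ hh)

set_option maxRecDepth 40000 in
lemma hB : ∀ ν : Fin 4 → Fin 4, Function.Injective ν →
    lie (lie (lie (μvec (ν 0)) (μvec (ν 1))) (μvec (ν 2))) (μvec (ν 3)) = 0 := by decide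

/-- In the free group on three generators `x₁, x₂, x₃` (with `x_{i+1} = FreeGroup.of i`),
the element `w = [[x₁, x₂], [x₁, x₂x₃]]` does NOT belong to the symmetric commutator
subgroup `[R₀, R₁, R₂, R₃]_S`, where `R_i` is the normal closure of `x_i` and `R₀` is
the normal closure of `x₁x₂x₃`. -/
theorem generator_not_mem_symmComm :
    commE (commE (FreeGroup.of 0) (FreeGroup.of 1))
        (commE (FreeGroup.of 0) (FreeGroup.of 1 * FreeGroup.of (2 : Fin 3))) ∉
      symmComm (R 3) := by
  intro hw
  have hle : symmComm (R 3) ≤ (Sg 0 4 (by omega) (Jp_zero 4)).comap φ := by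
    apply iSup_le
    intro σ
    have e : iterComm (List.ofFn fun i => R 3 (σ i))
        = ⁅⁅⁅R 3 (σ 0), R 3 (σ 1)⁆, R 3 (σ 2)⁆, R 3 (σ 3)⁆ := rfl
    rw [e]
    have h0123 := stepF (stepF (stepF (hR (σ 0)) (hR (σ 1))) (hR (σ 2))) (hR (σ 3))
    refine h0123.trans (Subgroup.comap_mono ?_)
    intro g hg
    obtain ⟨c, hc⟩ := hg
    have hz : lie (lie (lie (μvec (σ 0)) (μvec (σ 1))) (μvec (σ 2))) (μvec (σ 3)) = 0 :=
      hB (fun i => σ i) σ.injective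
    rw [hz, smul_zero] at hc
    exact ⟨c, by rw [smul_zero]; exact Jp_mono (by norm_num) hc⟩
  have hmem := hle hw
  obtain ⟨c, hc⟩ := hmem
  rw [smul_zero, sub_zero] at hc
  have h1 : ((φ (commE (commE (FreeGroup.of 0) (FreeGroup.of 1))
      (commE (FreeGroup.of 0) (FreeGroup.of 1 * FreeGroup.of (2 : Fin 3)))) : Amatˣ) : Amat) - 1
        = 0 := Jp_eq_zero (Jp_mono (by norm_num) hc)
  rw [sub_eq_zero] at h1
  have h2 : ((φ (commE (commE (FreeGroup.of 0) (FreeGroup.of 1))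
      (commE (FreeGroup.of 0) (FreeGroup.of 1 * FreeGroup.of (2 : Fin 3)))) : Amatˣ) : Amat)
        ≠ 1 := by
    simp only [commE, map_mul, map_inv, φ, FreeGroup.lift_apply_of, uM0, uM1, uM2]
    decide
  exact h2 h1
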